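/- arXiv:2401.07820 — 3 statements merged into one kernel-verified Lean document; each statement's English description precedes it below -/
import Mathlib

section
/- Let f : ℝ^p → ℝ be a nonnegative integrable function (an unnormalized posterior density) and let g(θ) = exp(−(ν/2)·θ'(I−P)θ) for ν > 0 and orthogonal projection P. Define B_ε = {θ : θ'(I−P)θ < ε}. If 0 < ∫_{B_ε} f / ∫ f < 1 and 0 < ∫_{B_ε} f·g / ∫ f·g < 1, then the normalized mass of B_ε under the tilted density f·g strictly exceeds the normalized mass of B_ε under f, i.e., (∫_{B_ε} f·g)/(∫ f·g) > (∫_{B_ε} f)/(∫ f). -/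
open Matrix MeasureTheory Real

theorem subset_posterior_concentration (p : ℕ) (f : (Fin p → ℝ) → ℝ)
    (hf_nonneg : ∀ θ, 0 ≤ f θ) (hf_int : Integrable f)
    (P : Matrix (Fin p) (Fin p) ℝ) (hsymm : P.IsSymm) (hidem : P * P = P)
    (ν : ℝ) (hν : 0 < ν) (ε : ℝ) (hε : 0 < ε)
    (g : (Fin p → ℝ) → ℝ)
    (hg : ∀ θ, g θ = Real.exp (-(ν/2) * (θ ⬝ᵥ ((1 - P) *ᵥ θ))))
    (B : Set (Fin p → ℝ)) (hB : B = {θ | θ ⬝ᵥ ((1 - P) *ᵥ θ) < ε})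
    (hfg_int : Integrable (fun θ => f θ * g θ))
    (h0 : 0 < (∫ θ in B, f θ) / (∫ θ, f θ))
    (h1 : (∫ θ in B, f θ) / (∫ θ, f θ) < 1)
    (h2 : 0 < (∫ θ in B, f θ * g θ) / (∫ θ, f θ * g θ))
    (h3 : (∫ θ in B, f θ * g θ) / (∫ θ, f θ * g θ) < 1) :
    (∫ θ in B, f θ * g θ) / (∫ θ, f θ * g θ) > (∫ θ in B, f θ) / (∫ θ, f θ) := by
  -- continuity / measurability of the quadratic form and of B
  have hq : Continuous fun θ : Fin p → ℝ => θ ⬝ᵥ ((1 - P) *ᵥ θ) := by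
    simp only [dotProduct, Matrix.mulVec, dotProduct]
    fun_prop
  have hBmeas : MeasurableSet B := by
    rw [hB]; exact measurableSet_lt (hq.measurable) measurable_const
  set c : ℝ := Real.exp (-(ν/2) * ε) with hc
  have hcpos : 0 < c := Real.exp_pos _
  -- g bounds
  have hgB : ∀ θ ∈ B, c < g θ := by
    intro θ hθ
    rw [hB] at hθ
    simp only [Set.mem_setOf_eq] at hθ
    rw [hg θ]
    apply Real.exp_lt_exp.2
    nlinarith
  have hgBc : ∀ θ ∉ B, g θ ≤ c := by
    intro θ hθ
    rw [hB] at hθ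
    simp only [Set.mem_setOf_eq, not_lt] at hθ
    rw [hg θ]
    apply Real.exp_le_exp.2
    nlinarith
  set A := ∫ θ in B, f θ with hA
  set A' := ∫ θ in Bᶜ, f θ with hA'
  set G := ∫ θ in B, f θ * g θ with hG
  set G' := ∫ θ in Bᶜ, f θ * g θ with hG'
  have hT : A + A' = ∫ θ, f θ := integral_add_compl hBmeas hf_int
  have hTg : G + G' = ∫ θ, f θ * g θ := integral_add_compl hBmeas hfg_int
  have hAnn : 0 ≤ A := setIntegral_nonneg hBmeas fun θ _ => hf_nonneg θ
  have hGnn : 0 ≤ G := setIntegral_nonneg hBmeas fun θ _ => by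
    have := (hg θ) ▸ (Real.exp_pos _).le
    exact mul_nonneg (hf_nonneg θ) ((hg θ) ▸ (Real.exp_pos _).le)
  -- total integrals positive
  have hTpos : 0 < ∫ θ, f θ := by
    rcases lt_or_ge 0 (∫ θ, f θ) with h | h
    · exact h
    · exfalso
      have : (∫ θ, f θ) = 0 := le_antisymm h (integral_nonneg hf_nonneg)
      rw [this, div_zero] at h0; exact lt_irrefl 0 h0
  have hTgpos : 0 < ∫ θ, f θ * g θ := by
    rcases lt_or_ge 0 (∫ θ, f θ * g θ) with h | h
    · exact h
    · exfalso
      have hnn : (0:ℝ) ≤ ∫ θ, f θ * g θ :=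
        integral_nonneg fun θ => mul_nonneg (hf_nonneg θ) ((hg θ) ▸ (Real.exp_pos _).le)
      have : (∫ θ, f θ * g θ) = 0 := le_antisymm h hnn
      rw [this, div_zero] at h2; exact lt_irrefl 0 h2
  have hApos : 0 < A := by
    by_contra h
    push_neg at h
    have : A = 0 := le_antisymm h hAnn
    rw [this, zero_div] at h0; exact lt_irrefl 0 h0
  have hA'pos : 0 < A' := by
    have hAlt : A < ∫ θ, f θ := by
      have := (div_lt_one hTpos).1 h1
      exact this
    linarith [hT]
  have hG'pos : 0 < G' := by
    have hGlt : G < ∫ θ, f θ * g θ := (div_lt_one hTgpos).1 h3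
    linarith [hTg]
  -- integrability of restrictions
  have hf_intB := hf_int.restrict (s := B)
  have hf_intBc := hf_int.restrict (s := Bᶜ)
  have hfg_intB := hfg_int.restrict (s := B)
  have hfg_intBc := hfg_int.restrict (s := Bᶜ)
  -- G' ≤ c * A'
  have hG'le : G' ≤ c * A' := by
    have : G' ≤ ∫ θ in Bᶜ, c * f θ := by
      apply setIntegral_mono_on hfg_intBc (hf_intBc.const_mul c) hBmeas.compl
      intro θ hθ
      have := hgBc θ (by simpa using hθ)
      nlinarith [hf_nonneg θ]
    simpa [integral_const_mul] using this
  -- strict: c * A < G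
  have hGgt : c * A < G := by
    by_contra h
    push_neg at h
    have hle : G ≤ ∫ θ in B, c * f θ := by
      simpa [integral_const_mul] using h
    have hmono : (∫ θ in B, c * f θ) ≤ G := by
      apply setIntegral_mono_on (hf_intB.const_mul c) hfg_intB hBmeas
      intro θ hθ
      have := hgB θ hθ
      nlinarith [hf_nonneg θ]
    have heq : (∫ θ in B, (fun θ => f θ * g θ - c * f θ) θ) = 0 := by
      rw [integral_sub hfg_intB (hf_intB.const_mul c)]
      have := le_antisymm hle hmono
      simp only [← hG] at this ⊢
      linarith
    have hnn : 0 ≤ᵐ[volume.restrict B] fun θ => f θ * g θ - c * f θ := by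
      filter_upwards [ae_restrict_mem hBmeas] with θ hθ
      have := hgB θ hθ
      show (0:ℝ) ≤ f θ * g θ - c * f θ
      nlinarith [hf_nonneg θ]
    have hzero : (fun θ => f θ * g θ - c * f θ) =ᵐ[volume.restrict B] 0 :=
      (setIntegral_eq_zero_iff_of_nonneg_ae hnn (hfg_intB.sub (hf_intB.const_mul c))).1 heq
    have hf0 : f =ᵐ[volume.restrict B] 0 := by
      filter_upwards [hzero, ae_restrict_mem hBmeas] with θ hθ hθB
      have hgc := hgB θ hθB
      simp only [Pi.zero_apply] at hθ ⊢
      by_contra hne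
      have hfpos : 0 < f θ := lt_of_le_of_ne (hf_nonneg θ) (Ne.symm hne)
      nlinarith
    have : A = 0 := by
      rw [hA]
      calc (∫ θ in B, f θ) = ∫ θ in B, (0:ℝ) := integral_congr_ae hf0
        _ = 0 := by simp
    linarith
  -- conclude
  rw [gt_iff_lt, div_lt_div_iff₀ hTpos hTgpos, ← hT, ← hTg]
  have key : A * G' < G * A' := by
    calc A * G' ≤ A * (c * A') := mul_le_mul_of_nonneg_left hG'le hAnn
      _ = (c * A) * A' := by ring
      _ < G * A' := mul_lt_mul_of_pos_right hGgt hA'pos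
  calc A * (G + G') = G * A + A * G' := by ring
    _ < G * A + G * A' := by linarith
    _ = G * (A + A') := by ring
end

section
/- Let f : ℝ^p → [0,∞) be integrable with ∫ f > 0, and let h : ℝ^p → (0,∞) be a bounded measurable function such that inf_{B} h ≥ sup_{B^c} h for a measurable set B, with strict inequality h(x) > h(y) for all x ∈ B, y ∈ B^c. If 0 < ∫_B f < ∫ f and ∫ f·h > 0, then ∫_B f·h / ∫ f·h > ∫_B f / ∫ f. -/
open MeasureTheory

section WeightedMean

variable {α : Type*} [MeasurableSpace α] {μ : Measure α} {f g : α → ℝ} {s : Set α}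

theorem setIntegral_mul_pos (hs : MeasurableSet s) (hf : ∀ x ∈ s, 0 ≤ f x)
    (hg : ∀ x ∈ s, 0 < g x) (hfi : IntegrableOn f s μ)
    (hfgi : IntegrableOn (fun x => f x * g x) s μ) (hpos : 0 < ∫ x in s, f x ∂μ) :
    0 < ∫ x in s, f x * g x ∂μ := by
  have hfg : 0 ≤ᵐ[μ.restrict s] fun x => f x * g x := by
    filter_upwards [ae_restrict_mem hs] with x hx
    exact mul_nonneg (hf x hx) (hg x hx).le
  rw [setIntegral_pos_iff_support_of_nonneg_ae (ae_restrict_of_forall_mem hs hf) hfi] at hpos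
  rw [setIntegral_pos_iff_support_of_nonneg_ae hfg hfgi]
  refine hpos.trans_le (measure_mono fun x ⟨hfx, hx⟩ => ⟨?_, hx⟩)
  exact mul_ne_zero hfx (hg x hx).ne'

theorem mul_setIntegral_lt_setIntegral_mul (hs : MeasurableSet s) (hf : ∀ x ∈ s, 0 ≤ f x)
    {c : ℝ} (hc : ∀ x ∈ s, c < g x) (hfi : IntegrableOn f s μ)
    (hfgi : IntegrableOn (fun x => f x * g x) s μ) (hpos : 0 < ∫ x in s, f x ∂μ) :
    c * ∫ x in s, f x ∂μ < ∫ x in s, f x * g x ∂μ := by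
  have hsub := setIntegral_mul_pos (g := fun x => g x - c) hs hf
    (fun x hx => sub_pos.2 (hc x hx)) hfi
    (by simpa only [mul_sub, Pi.sub_def] using hfgi.sub (hfi.mul_const c)) hpos
  simp only [mul_sub] at hsub
  rw [integral_sub hfgi (hfi.mul_const c), integral_mul_const] at hsub
  linarith

theorem setIntegral_mul_lt_mul_setIntegral (hs : MeasurableSet s) (hf : ∀ x ∈ s, 0 ≤ f x)
    {c : ℝ} (hc : ∀ x ∈ s, g x < c) (hfi : IntegrableOn f s μ)
    (hfgi : IntegrableOn (fun x => f x * g x) s μ) (hpos : 0 < ∫ x in s, f x ∂μ) :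
    ∫ x in s, f x * g x ∂μ < c * ∫ x in s, f x ∂μ := by
  have hneg := mul_setIntegral_lt_setIntegral_mul (g := fun x => -g x) hs hf
    (fun x hx => neg_lt_neg (hc x hx)) hfi (by simpa only [mul_neg, Pi.neg_def] using hfgi.neg) hpos
  simp only [mul_neg, integral_neg, neg_mul] at hneg
  linarith

/-- Each value of `g` off `s` lies below the `f`-weighted mean `m` of `g` on `s`, hence so does
the `f`-weighted mean of `g` on `sᶜ`. -/
theorem setIntegral_compl_mul_div_lt_setIntegral_mul_div (hs : MeasurableSet s)
    (hf : ∀ x, 0 ≤ f x) (hfi : Integrable f μ) (hfgi : Integrable (fun x => f x * g x) μ)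
    (hsep : ∀ x ∈ s, ∀ y ∉ s, g y < g x)
    (hpos : 0 < ∫ x in s, f x ∂μ) (hpos_compl : 0 < ∫ x in sᶜ, f x ∂μ) :
    (∫ x in sᶜ, f x * g x ∂μ) / ∫ x in sᶜ, f x ∂μ <
      (∫ x in s, f x * g x ∂μ) / ∫ x in s, f x ∂μ := by
  set m := (∫ x in s, f x * g x ∂μ) / ∫ x in s, f x ∂μ
  have hlt_mean : ∀ y ∈ sᶜ, g y < m := fun y hy => by
    rw [lt_div_iff₀ hpos]
    exact mul_setIntegral_lt_setIntegral_mul hs (fun x _ => hf x) (fun x hx => hsep x hx y hy)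
      hfi.integrableOn hfgi.integrableOn hpos
  rw [div_lt_iff₀ hpos_compl]
  exact setIntegral_mul_lt_mul_setIntegral hs.compl (fun x _ => hf x) hlt_mean
    hfi.integrableOn hfgi.integrableOn hpos_compl

end WeightedMean

theorem reweighting_increases_mass_general (p : ℕ) (f h : (Fin p → ℝ) → ℝ)
    (hf_nonneg : ∀ x, 0 ≤ f x) (hf_int : Integrable f)
    (hh_pos : ∀ x, 0 < h x) (hh_meas : Measurable h)
    (C : ℝ) (hh_bdd : ∀ x, h x ≤ C)
    (B : Set (Fin p → ℝ)) (hB_meas : MeasurableSet B)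
    (hinf_sup : ∀ x ∈ B, ∀ y ∉ B, h y < h x)
    (hB_pos : 0 < ∫ x in B, f x) (hB_lt : (∫ x in B, f x) < ∫ x, f x)
    (hfh_pos : 0 < ∫ x, f x * h x) :
    (∫ x in B, f x * h x) / (∫ x, f x * h x) > (∫ x in B, f x) / (∫ x, f x) := by
  have hfh_int : Integrable (fun x => f x * h x) :=
    hf_int.mul_bdd hh_meas.aestronglyMeasurable
      (ae_of_all _ fun x => (Real.norm_of_nonneg (hh_pos x).le).trans_le (hh_bdd x))
  have hsplit_f := integral_add_compl hB_meas hf_int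
  have hsplit_fh := integral_add_compl hB_meas hfh_int
  have hBc_pos : 0 < ∫ x in Bᶜ, f x := by linarith
  have hmean := setIntegral_compl_mul_div_lt_setIntegral_mul_div hB_meas hf_nonneg hf_int hfh_int
    hinf_sup hB_pos hBc_pos
  rw [div_lt_div_iff₀ hBc_pos hB_pos] at hmean
  rw [gt_iff_lt, div_lt_div_iff₀ (hB_pos.trans hB_lt) hfh_pos, ← hsplit_f, ← hsplit_fh]
  linarith

theorem reweighting_increases_mass (p : ℕ) (f h : (Fin p → ℝ) → ℝ)
    (hf_nonneg : ∀ x, 0 ≤ f x) (hf_int : Integrable f) (hf_pos : 0 < ∫ x, f x)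
    (hh_pos : ∀ x, 0 < h x) (hh_meas : Measurable h)
    (C : ℝ) (hh_bdd : ∀ x, h x ≤ C)
    (B : Set (Fin p → ℝ)) (hB_meas : MeasurableSet B)
    (hinf_sup : ∀ x ∈ B, ∀ y ∉ B, h y < h x)
    (hB_pos : 0 < ∫ x in B, f x) (hB_lt : (∫ x in B, f x) < ∫ x, f x)
    (hfh_pos : 0 < ∫ x, f x * h x) :
    (∫ x in B, f x * h x) / (∫ x, f x * h x) > (∫ x in B, f x) / (∫ x, f x) :=
  reweighting_increases_mass_general p f h hf_nonneg hf_int hh_pos hh_meas C hh_bdd B hB_meas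
    hinf_sup hB_pos hB_lt hfh_pos
end

section
/- Let Ω be a p×p symmetric positive definite matrix, P a p×p orthogonal projection, ν > 0, Ω̃ = Ω + ν(I−P), and m̃ = Ω̃^{-1}Ωm for m ∈ ℝ^p. Then m'Ωm − m̃'Ω̃m̃ ≥ 0, with equality if and only if ν·(I−P)m̃ = 0. -/
/-!
Write `Ω̃ = Ω + D` with `D = ν (I - P) ⪰ 0` and `u = m - m̃`. Since `Ω̃ m̃ = Ω m`, we have
`Ω u = D m̃`, and expanding the quadratic forms gives the decomposition
`m'Ωm - m̃'Ω̃m̃ = u'Ωu + m̃'Dm̃`. Both terms are nonnegative, and `m̃'Dm̃ = 0` forces `D m̃ = 0`,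
hence `Ω u = 0`, so the difference vanishes exactly when `D m̃ = 0`.
-/

open Matrix
open scoped MatrixOrder

namespace Matrix

variable {n : Type*} [Fintype n]

theorem dotProduct_mulVec_sub_dotProduct_add_mulVec {R : Type*} [CommRing R]
    {A D : Matrix n n R} (hA : A.IsSymm) {x y : n → R} (hy : (A + D) *ᵥ y = A *ᵥ x) :
    x ⬝ᵥ A *ᵥ x - y ⬝ᵥ (A + D) *ᵥ y = (x - y) ⬝ᵥ A *ᵥ (x - y) + y ⬝ᵥ D *ᵥ y := by
  have hsymm : x ⬝ᵥ A *ᵥ y = y ⬝ᵥ A *ᵥ x := by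
    rw [dotProduct_mulVec, ← mulVec_transpose, hA.eq, dotProduct_comm]
  have hyy : y ⬝ᵥ (A + D) *ᵥ y = y ⬝ᵥ A *ᵥ x := by rw [hy]
  simp only [add_mulVec, mulVec_sub, dotProduct_add, sub_dotProduct, dotProduct_sub] at hyy ⊢
  linear_combination (-2 : R) * hyy + hsymm

namespace PosSemidef

variable {A D : Matrix n n ℝ} {x y : n → ℝ}

theorem dotProduct_mulVec_self_nonneg (hA : A.PosSemidef) (x : n → ℝ) : 0 ≤ x ⬝ᵥ A *ᵥ x := by
  simpa only [star_trivial] using hA.dotProduct_mulVec_nonneg x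

theorem dotProduct_add_mulVec_le (hA : A.PosSemidef) (hD : D.PosSemidef)
    (hy : (A + D) *ᵥ y = A *ᵥ x) : y ⬝ᵥ (A + D) *ᵥ y ≤ x ⬝ᵥ A *ᵥ x := by
  rw [← sub_nonneg, dotProduct_mulVec_sub_dotProduct_add_mulVec
    (isHermitian_iff_isSymm.mp hA.isHermitian) hy]
  exact add_nonneg (hA.dotProduct_mulVec_self_nonneg _) (hD.dotProduct_mulVec_self_nonneg _)

theorem dotProduct_add_mulVec_eq_iff (hA : A.PosSemidef) (hD : D.PosSemidef)
    (hy : (A + D) *ᵥ y = A *ᵥ x) : y ⬝ᵥ (A + D) *ᵥ y = x ⬝ᵥ A *ᵥ x ↔ D *ᵥ y = 0 := by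
  rw [eq_comm, ← sub_eq_zero, dotProduct_mulVec_sub_dotProduct_add_mulVec
    (isHermitian_iff_isSymm.mp hA.isHermitian) hy]
  constructor
  · intro hsum
    have hDyy : y ⬝ᵥ D *ᵥ y = 0 := ((add_eq_zero_iff_of_nonneg
      (hA.dotProduct_mulVec_self_nonneg _) (hD.dotProduct_mulVec_self_nonneg _)).mp hsum).2
    simpa only [star_trivial] using (hD.dotProduct_mulVec_zero_iff y).mp hDyy
  · intro hDy
    have hAu : A *ᵥ (x - y) = D *ᵥ y := by
      rw [mulVec_sub, ← hy, add_mulVec]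
      abel
    rw [hAu, hDy, dotProduct_zero, dotProduct_zero, add_zero]

end PosSemidef

end Matrix

theorem quadratic_form_reduction (p : ℕ) (Ω : Matrix (Fin p) (Fin p) ℝ) (hΩ : Ω.PosDef)
    (P : Matrix (Fin p) (Fin p) ℝ) (hsymm : P.IsSymm) (hidem : P * P = P)
    (ν : ℝ) (hν : 0 < ν) (m : Fin p → ℝ)
    (Ωt : Matrix (Fin p) (Fin p) ℝ) (hΩt : Ωt = Ω + ν • (1 - P))
    (mt : Fin p → ℝ) (hmt : mt = Ωt⁻¹ *ᵥ (Ω *ᵥ m)) :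
    0 ≤ (m ⬝ᵥ (Ω *ᵥ m)) - (mt ⬝ᵥ (Ωt *ᵥ mt)) ∧
    ((m ⬝ᵥ (Ω *ᵥ m)) - (mt ⬝ᵥ (Ωt *ᵥ mt)) = 0 ↔ ν • ((1 - P) *ᵥ mt) = 0) := by
  have hP : IsStarProjection P := ⟨hidem, isHermitian_iff_isSymm.mpr hsymm⟩
  have hD : (ν • (1 - P)).PosSemidef :=
    (nonneg_iff_posSemidef.mp hP.one_sub_nonneg).smul hν.le
  have hΩt_unit : IsUnit Ωt.det := by
    rw [hΩt]
    exact (hΩ.add_posSemidef hD).isUnit.map detMonoidHom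
  have hΩt_mt : Ωt *ᵥ mt = Ω *ᵥ m := by
    rw [hmt, mulVec_mulVec, mul_nonsing_inv _ hΩt_unit, one_mulVec]
  subst hΩt
  rw [sub_nonneg, sub_eq_zero, eq_comm, ← smul_mulVec]
  exact ⟨hΩ.posSemidef.dotProduct_add_mulVec_le hD hΩt_mt,
    hΩ.posSemidef.dotProduct_add_mulVec_eq_iff hD hΩt_mt⟩
end
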